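/- Let E be a Dedekind complete Φ-algebra with unit e, and let r be a weak order unit of E. Then the bands B_m generated by ((r − (1/m)e)⁺) for m ∈ ℕ increase to E, and consequently, for every u ∈ E⁺, the net (P_m(u))_{m∈ℕ} of band projections applied to u increases to u. -/

import Mathlib

variable {E : Type*}

section Defs
variable [Lattice E] [AddCommGroup E] [CovariantClass E E (· + ·) (· ≤ ·)]

/-- The disjoint complement of a set. -/
def dComp (A : Set E) : Set E := {x | ∀ a ∈ A, |x| ⊓ |a| = 0}

/-- A band (in a space with the projection property) is a set equal to its double
disjoint complement. -/
def IsBand (B : Set E) : Prop := dComp (dComp B) = B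

/-- The band generated by an element. -/
def bandGen (u : E) : Set E := dComp (dComp ({u} : Set E))

/-- `P` is the band projection onto `B`: every `x` decomposes as `P x ∈ B` plus
`x - P x ∈ Bᵈ`. -/
def IsBandProjection (B : Set E) (P : E → E) : Prop :=
  (∀ x, P x ∈ B) ∧ (∀ x, x - P x ∈ dComp B)

/-- `u` is a weak order unit of the band `B`. -/
def IsWeakUnitOf (B : Set E) (u : E) : Prop :=
  u ∈ B ∧ 0 ≤ u ∧ ∀ z ∈ B, u ⊓ |z| = 0 → z = 0

/-- `u` is a weak order unit of `E`. -/
def IsWeakUnit (u : E) : Prop := 0 ≤ u ∧ ∀ z : E, u ⊓ |z| = 0 → z = 0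

end Defs

/-!
If `t ≥ 0` is disjoint from every `(r - (m + 1)⁻¹ • e)⁺`, then `t ⊓ r ≤ (m + 1)⁻¹ • e` for all `m`,
so `t ⊓ r = 0` because a Dedekind complete lattice-ordered group is Archimedean, and `t = 0`
because `r` is a weak unit. Hence the bands `B_m` have trivial common disjoint complement.
This gives both claims: a band containing every `B_m` has trivial disjoint complement, and for
an upper bound `x` of the `P_m u`, the element `(u - x)⁺ ≤ u - P_m u` is disjoint from every `B_m`.
-/

section LatticeOrderedGroup
variable [Lattice E] [AddCommGroup E]

lemma dComp_anti {A B : Set E} (h : A ⊆ B) : dComp B ⊆ dComp A :=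
  fun _ hx a ha => hx a (h ha)

lemma subset_dComp_dComp (A : Set E) : A ⊆ dComp (dComp A) :=
  fun x hx a ha => by rw [inf_comm]; exact ha x hx

lemma dComp_dComp_dComp (A : Set E) : dComp (dComp (dComp A)) = dComp A :=
  (dComp_anti (subset_dComp_dComp A)).antisymm (subset_dComp_dComp _)

lemma dComp_bandGen (u : E) : dComp (bandGen u) = dComp {u} :=
  dComp_dComp_dComp _

lemma IsBandProjection.abs_inf_abs_sub_eq_zero {B : Set E} {P : E → E}
    (hP : IsBandProjection B P) (x : E) : |P x| ⊓ |x - P x| = 0 := by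
  rw [inf_comm]; exact hP.2 x (P x) (hP.1 x)

variable [CovariantClass E E (· + ·) (· ≤ ·)]

lemma mem_dComp_singleton {u x : E} (hu : 0 ≤ u) : x ∈ dComp {u} ↔ |x| ⊓ u = 0 := by
  simp [dComp, abs_of_nonneg hu]

lemma eq_zero_of_mem_of_mem_dComp {A : Set E} {x : E} (hx : x ∈ A) (hx' : x ∈ dComp A) :
    x = 0 := by
  have h : |x| = 0 := by simpa using hx' x hx
  exact le_antisymm ((le_abs_self x).trans h.le) (neg_nonpos.1 ((neg_le_abs x).trans h.le))

lemma mem_dComp_of_abs_le {A : Set E} {x y : E} (hyx : |y| ≤ |x|) (hx : x ∈ dComp A) :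
    y ∈ dComp A :=
  fun a ha => le_antisymm ((inf_le_inf_right _ hyx).trans (hx a ha).le)
    (le_inf (abs_nonneg _) (abs_nonneg _))

lemma inf_add_le_add_inf {a b c : E} (ha : 0 ≤ a) (hb : 0 ≤ b) (hc : 0 ≤ c) :
    a ⊓ (b + c) ≤ a ⊓ b + a ⊓ c := by
  have key : a ⊓ (b + c) - a ⊓ c ≤ a ⊓ b := by
    rw [sub_eq_add_neg, neg_inf, add_sup, ← sub_eq_add_neg, ← sub_eq_add_neg]
    refine sup_le (le_inf ?_ ?_) (le_inf ?_ ?_)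
    · exact (sub_nonpos.2 inf_le_left).trans ha
    · exact (sub_nonpos.2 inf_le_left).trans hb
    · exact (sub_le_self _ hc).trans inf_le_left
    · exact sub_le_iff_le_add.2 inf_le_right
  exact sub_le_iff_le_add.1 key

lemma add_mem_dComp {A : Set E} {x y : E} (hx : x ∈ dComp A) (hy : y ∈ dComp A) :
    x + y ∈ dComp A := by
  intro a ha
  refine le_antisymm ?_ (le_inf (abs_nonneg _) (abs_nonneg _))
  calc |x + y| ⊓ |a| ≤ |a| ⊓ (|x| + |y|) := by rw [inf_comm]; gcongr; exact abs_add_le x y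
    _ ≤ |a| ⊓ |x| + |a| ⊓ |y| := inf_add_le_add_inf (abs_nonneg a) (abs_nonneg x) (abs_nonneg y)
    _ = 0 := by rw [inf_comm, hx a ha, inf_comm, hy a ha, add_zero]

lemma sub_mem_dComp {A : Set E} {x y : E} (hx : x ∈ dComp A) (hy : y ∈ dComp A) :
    x - y ∈ dComp A :=
  sub_eq_add_neg x y ▸ add_mem_dComp hx (mem_dComp_of_abs_le (abs_neg y).le hy)

lemma nonneg_of_abs_inf_abs_eq_zero_of_add_nonneg {a b : E} (hab : |a| ⊓ |b| = 0)
    (h : 0 ≤ a + b) : 0 ≤ a := by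
  have hneg : a⁻ ≤ 0 := by
    rw [← hab]
    refine le_inf (sup_le (neg_le_abs a) (abs_nonneg a)) (sup_le ?_ (abs_nonneg b))
    exact (neg_le_iff_add_nonneg'.2 h).trans (le_abs_self b)
  exact negPart_eq_zero.mp (hneg.antisymm (negPart_nonneg a))

lemma eq_univ_of_isBand {B : Set E} (hB : IsBand B) (h : ∀ z ∈ dComp B, z = 0) :
    B = Set.univ := by
  refine Set.eq_univ_of_forall fun x => hB ▸ fun a ha => ?_
  rw [h a ha, abs_zero, inf_eq_right.2 (abs_nonneg x)]

namespace IsBandProjection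
variable {B : Set E} {P : E → E} {u : E}

lemma sub_nonneg (hP : IsBandProjection B P) (hu : 0 ≤ u) : 0 ≤ u - P u :=
  nonneg_of_abs_inf_abs_eq_zero_of_add_nonneg
    (by rw [inf_comm]; exact hP.abs_inf_abs_sub_eq_zero u) (by simpa using hu)

lemma le_self (hP : IsBandProjection B P) (hu : 0 ≤ u) : P u ≤ u :=
  _root_.sub_nonneg.mp (hP.sub_nonneg hu)

lemma le_of_subset {A : Set E} {Q : E → E} (hP : IsBandProjection B P)
    (hQ : IsBandProjection (dComp A) Q) (hBA : B ⊆ dComp A) (hu : 0 ≤ u) : P u ≤ Q u := by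
  set t := (P u - Q u)⁺
  have ht : 0 ≤ t := posPart_nonneg _
  have h_in : t ∈ dComp A := by
    refine mem_dComp_of_abs_le ?_ (sub_mem_dComp (hBA (hP.1 u)) (hQ.1 u))
    rw [abs_of_nonneg ht]
    exact sup_le (le_abs_self _) (abs_nonneg _)
  have h_out : t ∈ dComp (dComp A) := by
    refine mem_dComp_of_abs_le ?_ (hQ.2 u)
    rw [abs_of_nonneg ht, abs_of_nonneg (hQ.sub_nonneg hu)]
    exact sup_le (sub_le_sub_right (hP.le_self hu) _) (hQ.sub_nonneg hu)
  exact sub_nonpos.mp (posPart_eq_zero.mp (eq_zero_of_mem_of_mem_dComp h_in h_out))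

end IsBandProjection

lemma isLUB_range_bandProjection {ι : Type*} {B : ι → Set E} {P : ι → E → E}
    (hP : ∀ i, IsBandProjection (B i) (P i)) (hB : ∀ z, (∀ i, z ∈ dComp (B i)) → z = 0)
    {u : E} (hu : 0 ≤ u) : IsLUB (Set.range fun i => P i u) u := by
  refine ⟨Set.forall_mem_range.2 fun i => (hP i).le_self hu, fun x hx => ?_⟩
  suffices (u - x)⁺ = 0 from sub_nonpos.mp (posPart_eq_zero.mp this)
  refine hB _ fun i => mem_dComp_of_abs_le ?_ ((hP i).2 u)
  rw [abs_of_nonneg (posPart_nonneg _), abs_of_nonneg ((hP i).sub_nonneg hu)]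
  exact sup_le (sub_le_sub_left (hx (Set.mem_range_self i)) u) ((hP i).sub_nonneg hu)

end LatticeOrderedGroup

section LevelBand
variable [Lattice E] [AddCommGroup E] [CovariantClass E E (· + ·) (· ≤ ·)] [Module ℝ E]

/-- The band `B_{(1/m)e ≤ r}` of the paper, indexed from `0` so that `levelBand e r m` uses
`1 / (m + 1)`. -/
def levelBand (e r : E) (m : ℕ) : Set E := dComp (bandGen (((m : ℝ) + 1)⁻¹ • e - r)⁺)

variable {e r : E}

lemma mem_levelBand {x : E} {m : ℕ} :
    x ∈ levelBand e r m ↔ |x| ⊓ (((m : ℝ) + 1)⁻¹ • e - r)⁺ = 0 := by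
  rw [levelBand, dComp_bandGen]
  exact mem_dComp_singleton (posPart_nonneg _)

lemma posPart_sub_mem_levelBand (m : ℕ) : (r - ((m : ℝ) + 1)⁻¹ • e)⁺ ∈ levelBand e r m := by
  rw [mem_levelBand, abs_of_nonneg (posPart_nonneg (r - _)), ← neg_sub r, posPart_neg]
  exact posPart_inf_negPart_eq_zero (r - ((m : ℝ) + 1)⁻¹ • e)

variable [PosSMulMono ℝ E]

lemma inv_succ_smul_anti (he : 0 ≤ e) : Antitone fun m : ℕ => ((m : ℝ) + 1)⁻¹ • e := by
  intro m n hmn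
  have hinv : ((n : ℝ) + 1)⁻¹ ≤ ((m : ℝ) + 1)⁻¹ := by gcongr
  exact sub_nonneg.1 (by rw [← sub_smul]; exact smul_nonneg (sub_nonneg.2 hinv) he)

lemma levelBand_mono (he : 0 ≤ e) : Monotone (levelBand e r) := by
  intro m n hmn x hx
  rw [mem_levelBand] at hx ⊢
  refine le_antisymm ?_ (le_inf (abs_nonneg x) (posPart_nonneg _))
  calc |x| ⊓ (((n : ℝ) + 1)⁻¹ • e - r)⁺ ≤ |x| ⊓ (((m : ℝ) + 1)⁻¹ • e - r)⁺ :=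
        inf_le_inf_left _ (posPart_mono (sub_le_sub_right (inv_succ_smul_anti he hmn) r))
    _ = 0 := hx

end LevelBand

section Archimedean
variable [ConditionallyCompleteLattice E] [AddCommGroup E] [CovariantClass E E (· + ·) (· ≤ ·)]

lemma eq_zero_of_forall_nsmul_le {t y : E} (ht : 0 ≤ t) (h : ∀ n : ℕ, n • t ≤ y) : t = 0 := by
  have hbdd : BddAbove (Set.range fun n : ℕ => n • t) := ⟨y, Set.forall_mem_range.2 h⟩
  set s := sSup (Set.range fun n : ℕ => n • t)
  have hs : s ≤ s - t := csSup_le (Set.range_nonempty _) <| Set.forall_mem_range.2 fun n =>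
    le_sub_iff_add_le.2 (succ_nsmul t n ▸ le_csSup hbdd ⟨n + 1, rfl⟩)
  exact ((le_sub_self_iff s).mp hs).antisymm ht

variable [Module ℝ E] [PosSMulMono ℝ E]

lemma eq_zero_of_forall_le_inv_smul {s e : E} (hs : 0 ≤ s)
    (h : ∀ m : ℕ, s ≤ ((m : ℝ) + 1)⁻¹ • e) : s = 0 := by
  refine eq_zero_of_forall_nsmul_le (y := e) hs fun n => ?_
  have hn : ((n : ℝ) + 1) ≠ 0 := by positivity
  calc n • s ≤ (n + 1) • s := by rw [succ_nsmul]; exact le_add_of_nonneg_right hs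
    _ = ((n : ℝ) + 1) • s := by norm_cast
    _ ≤ ((n : ℝ) + 1) • ((n : ℝ) + 1)⁻¹ • e := smul_le_smul_of_nonneg_left (h n) (by positivity)
    _ = e := by rw [smul_smul, mul_inv_cancel₀ hn, one_smul]

lemma eq_zero_of_forall_mem_dComp_levelBand {e r : E} (he : 0 ≤ e) (hr : IsWeakUnit r) {z : E}
    (hz : ∀ m, z ∈ dComp (levelBand e r m)) : z = 0 := by
  refine hr.2 z ?_
  rw [inf_comm]
  refine eq_zero_of_forall_le_inv_smul (e := e) (le_inf (abs_nonneg z) hr.1) fun m => ?_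
  set c := ((m : ℝ) + 1)⁻¹ • e
  have hc : 0 ≤ c := smul_nonneg (by positivity) he
  have hzw : |z| ⊓ (r - c)⁺ = 0 := by
    simpa [abs_of_nonneg (posPart_nonneg _)] using hz m _ (posPart_sub_mem_levelBand m)
  calc |z| ⊓ r ≤ |z| ⊓ ((r - c)⁺ + c) := inf_le_inf_left _ (sub_le_iff_le_add.1 (le_posPart _))
    _ ≤ |z| ⊓ (r - c)⁺ + |z| ⊓ c := inf_add_le_add_inf (abs_nonneg z) (posPart_nonneg _) hc
    _ = |z| ⊓ c := by rw [hzw, zero_add]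
    _ ≤ c := inf_le_right

end Archimedean

lemma one_nonneg_of_fAlgebra [Lattice E] [Ring E] [CovariantClass E E (· + ·) (· ≤ ·)]
    (hmulpos : ∀ a b : E, 0 ≤ a → 0 ≤ b → 0 ≤ a * b)
    (hfalg : ∀ a b c : E, a ⊓ b = 0 → 0 ≤ c → (c * a) ⊓ b = 0) : (0 : E) ≤ 1 := by
  set n := (1 : E)⁻
  have hn : 0 ≤ n := negPart_nonneg 1
  have hle : n ≤ n * (1 : E)⁺ := by
    calc n = n * (1 : E)⁺ - n * n := by rw [← mul_sub, posPart_sub_negPart, mul_one]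
      _ ≤ n * (1 : E)⁺ := sub_le_self _ (hmulpos n n hn hn)
  have hzero : n ≤ 0 := hfalg _ _ _ (posPart_inf_negPart_eq_zero 1) hn ▸ le_inf hle le_rfl
  exact negPart_eq_zero.mp (hzero.antisymm hn)

/-- for a weak order unit `r` in a Dedekind complete Φ-algebra, the
bands `B_{(1/m)e ≤ r}` increase to `E`, and `P_m u ↑ u` for every `u ≥ 0`. -/
theorem stmt9 [ConditionallyCompleteLattice E] [CommRing E]
    [CovariantClass E E (· + ·) (· ≤ ·)] [Module ℝ E] [PosSMulMono ℝ E]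
    (hmulpos : ∀ a b : E, 0 ≤ a → 0 ≤ b → 0 ≤ a * b)
    (hfalg : ∀ a b c : E, a ⊓ b = 0 → 0 ≤ c → (c * a) ⊓ b = 0)
    (r : E) (hr : IsWeakUnit r)
    (Bm : ℕ → Set E)
    (hBm : ∀ m : ℕ,
      Bm m = dComp (bandGen ((((m : ℝ) + 1)⁻¹ • (1 : E) - r) ⊔ 0)))
    (Pm : ℕ → E → E) (hPm : ∀ m, IsBandProjection (Bm m) (Pm m)) :
    (∀ m n : ℕ, m ≤ n → Bm m ⊆ Bm n) ∧
    (∀ B : Set E, IsBand B → (∀ m, Bm m ⊆ B) → B = Set.univ) ∧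
    (∀ u : E, 0 ≤ u →
      Monotone (fun m => Pm m u) ∧ IsLUB (Set.range fun m => Pm m u) u) := by
  obtain rfl : Bm = levelBand 1 r := funext hBm
  have hone : (0 : E) ≤ 1 := one_nonneg_of_fAlgebra hmulpos hfalg
  have htrivial : ∀ z, (∀ m, z ∈ dComp (levelBand 1 r m)) → z = 0 :=
    fun _ => eq_zero_of_forall_mem_dComp_levelBand hone hr
  refine ⟨fun _ _ hmn => levelBand_mono hone hmn, ?_, fun u hu => ⟨?_, ?_⟩⟩
  · exact fun B hB hsub => eq_univ_of_isBand hB fun z hz =>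
      htrivial z fun m => dComp_anti (hsub m) hz
  · exact fun m n hmn => (hPm m).le_of_subset (hPm n) (levelBand_mono hone hmn) hu
  · exact isLUB_range_bandProjection hPm htrivial hu
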